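/- arXiv:2211.03168 — 3 statements merged into one kernel-verified Lean document; each statement's English description precedes it below -/
import Mathlib

section
/- Let $k \le n$ be positive integers, let $X$ be a set, and let $\mathbf{x} \in X^k$, $\mathbf{i} \in [k]^k$, $\mathbf{a} \in [n]^k$. Then the number of tuples $\mathbf{b} \in [n]^k$ such that $\mathbf{b}_{\mathbf{i}} = \mathbf{a}$ and $\mathbf{b} \sim \mathbf{x}$ equals $(n - |\mathbf{x}_{\mathbf{i}}|)! / (n - |\mathbf{x}|)!$ if $\mathbf{a} \sim \mathbf{x}_{\mathbf{i}}$, and equals $0$ otherwise. -/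
/-!
A tuple `b` with `b ∼ x` is the same thing as an embedding of `range x` into `[n]`, namely
`x p ↦ b p`. The constraint `b ∘ i = a` forces `a ∼ x ∘ i` and prescribes this embedding on
`range (x ∘ i)`; the embeddings extending a prescribed one from `s` points to `m ≥ s` points
are the embeddings of the remaining `m - s` points into the `n - s` unused values, and there
are `(n - s)! / (n - m)!` of those.
-/

open Function Set

section Extensions

variable {α β : Type*} (s : Set α) (g : s ↪ β)

noncomputable def extensionsEquivEmbeddingCompl [DecidablePred (· ∈ s)] :
    {f : α ↪ β // ∀ t : s, f t = g t} ≃ (↥sᶜ ↪ ↥(range g)ᶜ) where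
  toFun f := ⟨fun t => ⟨f.1 t, by
      rintro ⟨u, hu⟩
      exact t.2 (f.1.injective ((f.2 u).trans hu) ▸ u.2)⟩,
    fun _ _ h => Subtype.ext (f.1.injective (congrArg Subtype.val h))⟩
  invFun e := ⟨⟨fun t => if h : t ∈ s then g ⟨t, h⟩ else e ⟨t, h⟩,
      Injective.dite _ g.injective (Subtype.val_injective.comp e.injective)
        fun h => (e _).2 ⟨_, h⟩⟩, fun t => dif_pos t.2⟩
  left_inv f := Subtype.ext <| Embedding.ext fun t => by
    by_cases h : t ∈ s
    · simp [h, f.2 ⟨t, h⟩]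
    · simp [h]
      rfl
  right_inv e := by ext t; exact dif_neg t.2

theorem card_extensions_embedding [Finite α] [Finite β] :
    Nat.card {f : α ↪ β // ∀ t : s, f t = g t} =
      (Nat.card β - s.ncard).descFactorial (Nat.card α - s.ncard) := by
  classical
  have : Fintype α := Fintype.ofFinite α
  have : Fintype β := Fintype.ofFinite β
  rw [Nat.card_congr (extensionsEquivEmbeddingCompl s g), Nat.card_eq_fintype_card,
    Fintype.card_embedding_eq]
  simp only [← Nat.card_eq_fintype_card, Nat.card_coe_set_eq]
  rw [ncard_compl, ncard_compl, ncard_range_of_injective g.injective, Nat.card_coe_set_eq]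

end Extensions

section KerEq

variable {ι κ T β : Type*}

noncomputable def kerEqEquivRangeEmbedding (f : ι → T) :
    {b : ι → β // ∀ p p', b p = b p' ↔ f p = f p'} ≃ (range f ↪ β) where
  toFun b := ⟨b.1 ∘ rangeSplitting f, fun t t' h => Subtype.ext <| by
    rw [← apply_rangeSplitting f t, ← apply_rangeSplitting f t']
    exact (b.2 _ _).1 h⟩
  invFun g := ⟨g ∘ rangeFactorization f, fun _ _ => g.injective.eq_iff.trans Subtype.ext_iff⟩
  left_inv b := Subtype.ext <| funext fun p => (b.2 _ _).2 (apply_rangeSplitting f _)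
  right_inv g := Embedding.ext fun t => congrArg g (leftInverse_rangeSplitting f t)

theorem kerEqEquivRangeEmbedding_apply_rangeFactorization (f : ι → T)
    (b : {b : ι → β // ∀ p p', b p = b p' ↔ f p = f p'}) (p : ι) :
    kerEqEquivRangeEmbedding f b (rangeFactorization f p) = b.1 p :=
  congrFun (congrArg Subtype.val ((kerEqEquivRangeEmbedding f).symm_apply_apply b)) p

theorem ncard_range_rangeFactorization_comp (x : ι → T) (i : κ → ι) :
    (range (rangeFactorization x ∘ i)).ncard = (range (x ∘ i)).ncard := by
  rw [← ncard_image_of_injective _ Subtype.val_injective, ← range_comp]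
  rfl

theorem card_comp_eq_and_kerEq [Finite ι] [Finite β] (x : ι → T) (i : κ → ι)
    (a : κ → β) (ha : ∀ p p', a p = a p' ↔ x (i p) = x (i p')) :
    Nat.card {b : ι → β // (∀ j, b (i j) = a j) ∧ ∀ p p', b p = b p' ↔ x p = x p'} =
      (Nat.card β - (range (x ∘ i)).ncard).descFactorial
        ((range x).ncard - (range (x ∘ i)).ncard) := by
  let q := rangeFactorization x
  let a' : {a : κ → β // ∀ p p', a p = a p' ↔ (q ∘ i) p = (q ∘ i) p'} :=
    ⟨a, fun p p' => (ha p p').trans ⟨fun h => Subtype.ext h, congrArg Subtype.val⟩⟩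
  let g := kerEqEquivRangeEmbedding (q ∘ i) a'
  have hg (j : κ) : g (rangeFactorization (q ∘ i) j) = a j :=
    kerEqEquivRangeEmbedding_apply_rangeFactorization _ a' j
  rw [← ncard_range_rangeFactorization_comp, ← Nat.card_coe_set_eq (range x),
    ← card_extensions_embedding _ g]
  refine Nat.card_congr <| (Equiv.subtypeEquivRight fun b => and_comm).trans <|
    (Equiv.subtypeSubtypeEquivSubtypeInter _ _).symm.trans <|
      Equiv.subtypeEquiv (kerEqEquivRangeEmbedding x) fun b => ?_
  rw [forall_subtype_range_iff]
  refine forall_congr' fun j => ?_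
  rw [← hg j, ← kerEqEquivRangeEmbedding_apply_rangeFactorization x b (i j)]
  rfl

end KerEq

open Classical in
theorem stmt_0_general {X : Type*} (k n : ℕ) (hkn : k ≤ n)
    (x : Fin k → X) (i : Fin k → Fin k) (a : Fin k → Fin n) :
    Nat.card {b : Fin k → Fin n //
        (∀ j, b (i j) = a j) ∧ (∀ p q, b p = b q ↔ x p = x q)} =
      if ∀ p q, a p = a q ↔ x (i p) = x (i q) then
        Nat.factorial (n - (Set.range (x ∘ i)).ncard) /
          Nat.factorial (n - (Set.range x).ncard)
      else 0 := by
  split_ifs with ha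
  · have hxi : (range (x ∘ i)).ncard ≤ (range x).ncard :=
      ncard_le_ncard (range_comp_subset_range i x)
    have hx : (range x).ncard ≤ n := by
      calc (range x).ncard ≤ Nat.card (Fin k) :=
            Nat.card_coe_set_eq (range x) ▸ Finite.card_range_le x
        _ = k := Nat.card_fin k
        _ ≤ n := hkn
    rw [card_comp_eq_and_kerEq x i a ha, Nat.card_fin,
      Nat.descFactorial_eq_div (Nat.sub_le_sub_right hx _), tsub_tsub_tsub_cancel_right hxi]
  · have : IsEmpty {b : Fin k → Fin n //
        (∀ j, b (i j) = a j) ∧ (∀ p q, b p = b q ↔ x p = x q)} :=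
      ⟨fun ⟨b, hbi, hbx⟩ => ha fun p q => by rw [← hbi p, ← hbi q, hbx]⟩
    exact Nat.card_of_isEmpty

open Classical in
/-- Lemma: counting tuples `b ∈ [n]^k` with `b ∘ i = a` and `b ∼ x`. -/
theorem stmt_0 {X : Type*} (k n : ℕ) (hk : 0 < k) (hkn : k ≤ n)
    (x : Fin k → X) (i : Fin k → Fin k) (a : Fin k → Fin n) :
    Nat.card {b : Fin k → Fin n //
        (∀ j, b (i j) = a j) ∧ (∀ p q, b p = b q ↔ x p = x q)} =
      if ∀ p q, a p = a q ↔ x (i p) = x (i q) then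
        Nat.factorial (n - (Set.range (x ∘ i)).ncard) /
          Nat.factorial (n - (Set.range x).ncard)
      else 0 :=
  stmt_0_general k n hkn x i a
end

section
/- Let $p, q$ be positive integers and $\mathbf{n} \in \mathbb{N}^q$. A $(p,\mathbf{n})$-system of shadows is realistic if and only if it is realisable. In particular, a family of $p$-dimensional integer tensors indexed by increasing $p$-tuples in $[q]$ arises as the family of oriented $p$-dimensional projections of a single $q$-dimensional integer tensor if and only if all pairs of its members have equal projections onto their common $(p-1)$-dimensional sub-hyperplanes. -/
/-- The projection of a tensor `C` of format `nn` onto the modes indexed by `i`. -/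
def dproj {q p : ℕ} {nn : Fin q → ℕ} (C : ((t : Fin q) → Fin (nn t)) → ℤ)
    (i : Fin p → Fin q) : ((t : Fin p) → Fin (nn (i t))) → ℤ :=
  fun a => ∑ b : (t : Fin q) → Fin (nn t), if (fun t => b (i t)) = a then C b else 0

/-!
A tensor on the modes `A ⊆ [q]` is stored as a tensor on all modes supported on the points whose
coordinates outside `A` are `0`. Projecting onto `A` is then the pushforward `P_A` along
`zeroOutside A`, and `P_A ∘ P_B = P_{A ∩ B}`.

Realism says that the lifted shadows `T_I` (`|I| = p`) agree after projection to `I ∩ J`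
whenever `|I ∩ J| = p - 1`; exchanging one mode at a time, they agree on every `I ∩ J`. Hence
`G_A := P_A T_J`, for any `p`-set `J ⊇ A`, is well defined when `|A| ≤ p`, and
`P_I G_A = G_{A ∩ I}`. The tensor `C = ∑_A c_{|A|} G_A`, with `c_k` the coefficient of `X^p`
in `X^k (1 + X)^{-(q-p)}`, realises the system:
`P_I C = ∑_{B ⊆ I} (∑_{A ∩ I = B} c_{|A|}) G_B`, and the inner sum is the coefficient
of `X^p` in `X^{|B|} (1 + X)^{q-p} (1 + X)^{-(q-p)}`, that is `[B = I]`.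
-/

open Finset PowerSeries

section Pushforward

variable {X Y Z M : Type*} [Fintype X] [DecidableEq Y] [AddCommMonoid M]

def pushforward (f : X → Y) : (X → M) →+ (Y → M) where
  toFun C y := ∑ x, if f x = y then C x else 0
  map_zero' := by ext; simp
  map_add' C C' := by ext; simp only [Pi.add_apply, ← sum_add_distrib, ite_add_ite, add_zero]

theorem pushforward_apply (f : X → Y) (C : X → M) (y : Y) :
    pushforward f C y = ∑ x, if f x = y then C x else 0 := rfl

theorem pushforward_pushforward [Fintype Y] [DecidableEq Z] (f : X → Y) (g : Y → Z)
    (C : X → M) : pushforward g (pushforward f C) = pushforward (g ∘ f) C := by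
  ext z
  simp only [pushforward_apply, ite_sum_zero, Function.comp_apply]
  rw [sum_comm]
  refine sum_congr rfl fun x _ => ?_
  rw [sum_eq_single (f x) (fun y _ hy => by simp [Ne.symm hy]) (by simp)]
  simp

theorem pushforward_id [DecidableEq X] (C : X → M) : pushforward id C = C := by
  ext x
  simp [pushforward_apply]

end Pushforward

section InclusionExclusion

variable {α : Type*} [Fintype α] [DecidableEq α]

theorem sum_pow_card_filter_inter_eq {R : Type*} [CommSemiring R] (x : R) {B I : Finset α}
    (hB : B ⊆ I) : ∑ A with A ∩ I = B, x ^ #A = x ^ #B * (x + 1) ^ #Iᶜ := by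
  calc ∑ A with A ∩ I = B, x ^ #A = ∑ D ∈ Iᶜ.powerset, x ^ #(B ∪ D) := by
        refine sum_nbij' (· \ I) (B ∪ ·) (fun A _ => ?_) (fun D hD => ?_) (fun A hA => ?_)
          (fun D hD => ?_) (fun A hA => ?_)
        all_goals simp only [mem_filter, mem_univ, true_and, mem_powerset] at *
        · exact fun x hx => mem_compl.mpr (mem_sdiff.mp hx).2
        · grind [mem_compl]
        · rw [← hA, union_comm, sdiff_union_inter]
        · grind [mem_compl]
        · rw [← hA, union_comm (A ∩ I), sdiff_union_inter]
    _ = x ^ #B * (x + 1) ^ #Iᶜ := by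
        have hunion : ∀ D ∈ Iᶜ.powerset, #(B ∪ D) = #B + #D := fun D hD =>
          card_union_of_disjoint (disjoint_of_subset_left hB (subset_compl_iff_disjoint_left.mp
            (mem_powerset.mp hD)))
        rw [sum_congr rfl fun D hD => by rw [hunion D hD, pow_add], ← mul_sum,
          ← sum_pow_mul_eq_add_pow]
        simp

noncomputable def invOneAddXPow (n : ℕ) : ℤ⟦X⟧ := invOfUnit ((1 + X) ^ n) 1

theorem sum_coeff_filter_inter_eq {B I : Finset α} (hB : B ⊆ I) :
    ∑ A with A ∩ I = B, coeff #I (X ^ #A * invOneAddXPow #Iᶜ) = if B = I then 1 else 0 := by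
  have hinv : (X + 1) ^ #Iᶜ * invOneAddXPow #Iᶜ = 1 := by
    rw [add_comm]; exact mul_invOfUnit _ _ (by simp)
  rw [← map_sum, ← sum_mul, sum_pow_card_filter_inter_eq X hB, mul_assoc, hinv, mul_one,
    coeff_X_pow]
  exact if_congr ⟨fun h => eq_of_subset_of_card_le hB h.le, fun h => h ▸ rfl⟩ rfl rfl

theorem map_sum_coeff_smul_eq {M : Type*} [AddCommGroup M] {P : Finset α → M →+ M}
    {G : Finset α → M} {p : ℕ} (hG : ∀ A I, #A ≤ p → #I = p → P I (G A) = G (A ∩ I))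
    {I : Finset α} (hI : #I = p) :
    P I (∑ A, coeff p (X ^ #A * invOneAddXPow (Fintype.card α - p)) • G A) = G I := by
  subst hI
  rw [← card_compl]
  have hcoeff : ∀ A : Finset α, #I < #A → coeff #I (X ^ #A * invOneAddXPow #Iᶜ) = 0 :=
    fun A hA => by rw [coeff_X_pow_mul', if_neg hA.not_ge]
  calc P I (∑ A, coeff #I (X ^ #A * invOneAddXPow #Iᶜ) • G A)
      = ∑ A, coeff #I (X ^ #A * invOneAddXPow #Iᶜ) • G (A ∩ I) := by
        rw [map_sum]
        refine sum_congr rfl fun A _ => ?_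
        rw [map_zsmul]
        rcases le_or_gt #A #I with hA | hA
        · rw [hG A I hA rfl]
        · rw [hcoeff A hA, zero_smul, zero_smul]
    _ = ∑ B ∈ I.powerset, (if B = I then 1 else 0 : ℤ) • G B := by
        rw [← sum_fiberwise_of_maps_to (t := I.powerset) (g := (· ∩ I))
          (fun A _ => mem_powerset.mpr inter_subset_right)]
        refine sum_congr rfl fun B hB => ?_
        rw [← sum_coeff_filter_inter_eq (mem_powerset.mp hB), sum_smul]
        exact sum_congr rfl fun A hA => by rw [(mem_filter.mp hA).2]
    _ = G I := by simp

end InclusionExclusion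

section Consistency

variable {α M : Type*} [DecidableEq α]

theorem exists_exchange {I J : Finset α} (hIJ : #I = #J) (hne : (I \ J).Nonempty) :
    ∃ I', #I' = #I ∧ #(I ∩ I') + 1 = #I ∧ #(I' \ J) + 1 = #(I \ J) ∧
      I ∩ J ⊆ I ∩ I' ∧ I ∩ J ⊆ I' ∩ J := by
  obtain ⟨a, ha⟩ := hne
  obtain ⟨b, hb⟩ : (J \ I).Nonempty :=
    card_pos.mp (card_sdiff_comm hIJ ▸ card_pos.mpr ⟨a, ha⟩)
  rw [mem_sdiff] at ha hb
  refine ⟨insert b (I.erase a), ?_, ?_, ?_, by grind, by grind⟩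
  · rw [card_insert_of_notMem (by grind), card_erase_add_one ha.1]
  · rw [show I ∩ insert b (I.erase a) = I.erase a by grind, card_erase_add_one ha.1]
  · rw [show insert b (I.erase a) \ J = (I \ J).erase a by grind,
      card_erase_add_one (mem_sdiff.mpr ha)]

variable {P : Finset α → M → M}

theorem proj_eq_of_subset (hP : ∀ A B x, P A (P B x) = P (A ∩ B) x) {A K : Finset α}
    (hAK : A ⊆ K) {x y : M} (h : P K x = P K y) : P A x = P A y := by
  rw [← inter_eq_left.mpr hAK, ← hP, h, hP]

theorem proj_inter_eq_of_adjacent (hP : ∀ A B x, P A (P B x) = P (A ∩ B) x) {p : ℕ}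
    {T : Finset α → M}
    (hadj : ∀ I J, #I = p → #J = p → #(I ∩ J) + 1 = p →
      P (I ∩ J) (T I) = P (I ∩ J) (T J))
    {I J : Finset α} (hI : #I = p) (hJ : #J = p) : P (I ∩ J) (T I) = P (I ∩ J) (T J) := by
  induction h : #(I \ J) generalizing I with
  | zero =>
    rw [eq_of_subset_of_card_le (sdiff_eq_empty_iff_subset.mp (card_eq_zero.mp h)) (by omega)]
  | succ n ih =>
    obtain ⟨I', hI', hII', hI'J, hsub, hsub'⟩ :=
      exists_exchange (hI.trans hJ.symm) (card_pos.mp (by omega))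
    calc P (I ∩ J) (T I) = P (I ∩ J) (T I') :=
          proj_eq_of_subset hP hsub (hadj I I' hI (by omega) (by omega))
      _ = P (I ∩ J) (T J) := proj_eq_of_subset hP hsub' (ih (by omega) (by omega))

end Consistency

section Realisation

variable {α M : Type*} [Fintype α] [DecidableEq α] [AddCommGroup M] {P : Finset α → M →+ M}

theorem exists_proj_eq_of_adjacent (hP : ∀ A B x, P A (P B x) = P (A ∩ B) x) {p : ℕ}
    {T : Finset α → M} (hT : ∀ I, #I = p → P I (T I) = T I)
    (hadj : ∀ I J, #I = p → #J = p → #(I ∩ J) + 1 = p →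
      P (I ∩ J) (T I) = P (I ∩ J) (T J)) :
    ∃ C, ∀ I, #I = p → P I C = T I := by
  rcases lt_or_ge (Fintype.card α) p with hp | hp
  · exact ⟨0, fun I hI => absurd (hI ▸ card_le_univ I) hp.not_ge⟩
  have hsuperset : ∀ A : Finset α, ∃ J, #J = p ∧ (#A ≤ p → A ⊆ J) := fun A => by
    by_cases hA : #A ≤ p
    · obtain ⟨J, hAJ, hJ⟩ := exists_superset_card_eq hA hp
      exact ⟨J, hJ, fun _ => hAJ⟩
    · -- any `p`-set will do: the coefficient of such an `A` in the realisation below is `0`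
      obtain ⟨J, -, hJ⟩ :=
        exists_subset_card_eq (s := univ) (show p ≤ #(univ : Finset α) by rwa [card_univ])
      exact ⟨J, hJ, fun h => absurd h hA⟩
  choose J hJ hAJ using hsuperset
  refine ⟨∑ A, coeff p (X ^ #A * invOneAddXPow (Fintype.card α - p)) • P A (T (J A)),
    fun I hI => ?_⟩
  have hJI : J I = I := (eq_of_subset_of_card_le (hAJ I hI.le) (by rw [hJ, hI])).symm
  rw [map_sum_coeff_smul_eq (G := fun A => P A (T (J A))) ?_ hI, hJI, hT I hI]
  intro A I hA hI
  have hAI : A ∩ I ⊆ J A ∩ J (A ∩ I) :=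
    subset_inter (inter_subset_left.trans (hAJ A hA))
      (hAJ _ ((card_le_card inter_subset_right).trans hI.le))
  rw [hP, inter_comm]
  exact proj_eq_of_subset hP hAI (proj_inter_eq_of_adjacent hP hadj (hJ A) (hJ _))

end Realisation

section Tensor

variable {q : ℕ} {nn : Fin q → ℕ}

theorem dproj_eq_pushforward {p : ℕ} (C : ((t : Fin q) → Fin (nn t)) → ℤ)
    (i : Fin p → Fin q) : dproj C i = pushforward (fun b t => b (i t)) C := rfl

theorem dproj_dproj {p k : ℕ} (C : ((t : Fin q) → Fin (nn t)) → ℤ) (i : Fin p → Fin q)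
    (r : Fin k → Fin p) : dproj (dproj C i) r = dproj C (fun u => i (r u)) :=
  pushforward_pushforward _ _ C

variable (hnn : ∀ t, 0 < nn t)

def zeroOutside (A : Finset (Fin q)) (b : (t : Fin q) → Fin (nn t)) :
    (t : Fin q) → Fin (nn t) :=
  fun t => if t ∈ A then b t else ⟨0, hnn t⟩

noncomputable def zeroExtend {k : ℕ} (e : Fin k → Fin q) (a : (u : Fin k) → Fin (nn (e u))) :
    (t : Fin q) → Fin (nn t) :=
  fun t => if h : ∃ u, e u = t then Fin.cast (congrArg nn h.choose_spec) (a h.choose)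
    else ⟨0, hnn t⟩

theorem zeroOutside_comp_zeroOutside (A B : Finset (Fin q)) :
    zeroOutside hnn A ∘ zeroOutside hnn B = zeroOutside hnn (A ∩ B) := by
  funext b t
  by_cases hA : t ∈ A <;> by_cases hB : t ∈ B <;> simp [zeroOutside, hA, hB]

theorem zeroExtend_apply {k : ℕ} {e : Fin k → Fin q} (he : e.Injective)
    (a : (u : Fin k) → Fin (nn (e u))) (u : Fin k) : zeroExtend hnn e a (e u) = a u := by
  have h : ∃ u', e u' = e u := ⟨u, rfl⟩
  rw [zeroExtend, dif_pos h]
  ext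
  rw [Fin.val_cast, he h.choose_spec]

theorem zeroExtend_comp_restrict {k : ℕ} (e : Fin k → Fin q) :
    zeroExtend hnn e ∘ (fun b u => b (e u)) = zeroOutside hnn (image e univ) := by
  funext b t
  by_cases h : ∃ u, e u = t
  · have ht : t ∈ image e univ := by simpa using h
    simp only [Function.comp_apply, zeroExtend, dif_pos h, zeroOutside, if_pos ht]
    ext
    rw [Fin.val_cast, h.choose_spec]
  · have ht : t ∉ image e univ := by simpa using h
    simp only [Function.comp_apply, zeroExtend, dif_neg h, zeroOutside, if_neg ht]

theorem pushforward_zeroOutside_image {p : ℕ} (C : ((t : Fin q) → Fin (nn t)) → ℤ)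
    (i : Fin p → Fin q) :
    pushforward (zeroOutside hnn (image i univ)) C
      = pushforward (zeroExtend hnn i) (dproj C i) := by
  rw [← zeroExtend_comp_restrict, ← pushforward_pushforward, dproj_eq_pushforward]

theorem restrict_comp_zeroExtend {p : ℕ} {i : Fin p → Fin q} (hi : i.Injective) :
    (fun b t => b (i t)) ∘ zeroExtend hnn i = id := by
  funext a t
  exact zeroExtend_apply hnn hi a t

theorem dproj_pushforward_zeroExtend {p : ℕ} {i : Fin p → Fin q} (hi : i.Injective)
    (D : ((t : Fin p) → Fin (nn (i t))) → ℤ) :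
    dproj (pushforward (zeroExtend hnn i) D) i = D := by
  rw [dproj_eq_pushforward, pushforward_pushforward, restrict_comp_zeroExtend hnn hi,
    pushforward_id]

theorem dproj_eq_iff {p : ℕ} {i : Fin p → Fin q} (hi : i.Injective)
    (C : ((t : Fin q) → Fin (nn t)) → ℤ) (D : ((t : Fin p) → Fin (nn (i t))) → ℤ) :
    dproj C i = D ↔
      pushforward (zeroOutside hnn (image i univ)) C = pushforward (zeroExtend hnn i) D := by
  rw [pushforward_zeroOutside_image]
  exact (Function.LeftInverse.injective (g := (dproj · i))
    (dproj_pushforward_zeroExtend hnn hi)).eq_iff.symm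

theorem pushforward_zeroOutside_comp {p k : ℕ} {i : Fin p → Fin q} (hi : i.Injective)
    (r : Fin k → Fin p) (D : ((t : Fin p) → Fin (nn (i t))) → ℤ) :
    pushforward (zeroOutside hnn (image (fun u => i (r u)) univ))
        (pushforward (zeroExtend hnn i) D) =
      pushforward (zeroExtend hnn (fun u => i (r u))) (dproj D r) := by
  rw [pushforward_zeroOutside_image, ← dproj_dproj, dproj_pushforward_zeroExtend hnn hi]

theorem pushforward_zeroOutside_self {p : ℕ} {i : Fin p → Fin q} (hi : i.Injective)
    (D : ((t : Fin p) → Fin (nn (i t))) → ℤ) :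
    pushforward (zeroOutside hnn (image i univ)) (pushforward (zeroExtend hnn i) D)
      = pushforward (zeroExtend hnn i) D := by
  rw [pushforward_zeroOutside_image, dproj_pushforward_zeroExtend hnn hi]

theorem pushforward_zeroExtend_congr {k : ℕ} {e e' : Fin k → Fin q} (h : e = e')
    {D : ((u : Fin k) → Fin (nn (e u))) → ℤ} {D' : ((u : Fin k) → Fin (nn (e' u))) → ℤ}
    (hD : HEq D D') :
    pushforward (zeroExtend hnn e) D = pushforward (zeroExtend hnn e') D' := by
  subst h
  rw [eq_of_heq hD]

end Tensor

theorem exists_strictMono_image_eq {α : Type*} [LinearOrder α] {I : Finset α} {p : ℕ}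
    (h : #I = p) : ∃ i : Fin p → α, StrictMono i ∧ image i univ = I :=
  ⟨I.orderEmbOfFin h, (I.orderEmbOfFin h).strictMono, image_orderEmbOfFin_univ I h⟩

theorem exists_strictMono_comp_eq {α : Type*} [LinearOrder α] {p k : ℕ} {i : Fin p → α}
    {e : Fin k → α} (hi : StrictMono i) (he : StrictMono e) (h : image e univ ⊆ image i univ) :
    ∃ r : Fin k → Fin p, StrictMono r ∧ (fun u => i (r u)) = e := by
  choose r hr using fun u => mem_image.mp (h (mem_image_of_mem e (mem_univ u)))
  refine ⟨r, fun u v huv => hi.lt_iff_lt.mp ?_, funext fun u => (hr u).2⟩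
  rw [(hr u).2, (hr v).2]
  exact he huv

section Shadows

variable {p q : ℕ} {nn : Fin q → ℕ}

abbrev ShadowSystem (p : ℕ) (nn : Fin q → ℕ) : Type :=
  (i : Fin p → Fin q) → ((t : Fin p) → Fin (nn (i t))) → ℤ

def IsRealistic (S : ShadowSystem p nn) : Prop :=
  ∀ (i j : Fin p → Fin q), StrictMono i → StrictMono j →
    ∀ (r s : Fin (p - 1) → Fin p), StrictMono r → StrictMono s →
      (fun t => i (r t)) = (fun t => j (s t)) → HEq (dproj (S i) r) (dproj (S j) s)

def IsRealisable (S : ShadowSystem p nn) : Prop :=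
  ∃ C : ((t : Fin q) → Fin (nn t)) → ℤ,
    ∀ i : Fin p → Fin q, StrictMono i → dproj C i = S i

theorem IsRealisable.isRealistic {S : ShadowSystem p nn} (h : IsRealisable S) : IsRealistic S := by
  obtain ⟨C, hC⟩ := h
  intro i j hi hj r s _ _ hrs
  rw [← hC i hi, ← hC j hj, dproj_dproj, dproj_dproj]
  exact congr_arg_heq (dproj C) hrs

noncomputable def liftShadow (hnn : ∀ t, 0 < nn t) (S : ShadowSystem p nn)
    (I : Finset (Fin q)) : ((t : Fin q) → Fin (nn t)) → ℤ :=
  if h : #I = p then pushforward (zeroExtend hnn (I.orderEmbOfFin h)) (S (I.orderEmbOfFin h))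
  else 0

variable {S : ShadowSystem p nn}

theorem liftShadow_image (hnn : ∀ t, 0 < nn t) {i : Fin p → Fin q} (hi : StrictMono i) :
    liftShadow hnn S (image i univ) = pushforward (zeroExtend hnn i) (S i) := by
  have hcard : #(image i univ) = p := by simp [card_image_of_injective _ hi.injective]
  rw [liftShadow, dif_pos hcard,
    ← orderEmbOfFin_unique hcard (fun u => mem_image_of_mem i (mem_univ u)) hi]

theorem IsRealistic.proj_inter_eq (H : IsRealistic S) (hnn : ∀ t, 0 < nn t)
    {I J : Finset (Fin q)} (hI : #I = p) (hJ : #J = p) (hIJ : #(I ∩ J) + 1 = p) :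
    pushforward (zeroOutside hnn (I ∩ J)) (liftShadow hnn S I)
      = pushforward (zeroOutside hnn (I ∩ J)) (liftShadow hnn S J) := by
  obtain ⟨i, hi, rfl⟩ := exists_strictMono_image_eq hI
  obtain ⟨j, hj, rfl⟩ := exists_strictMono_image_eq hJ
  obtain ⟨k, hk, hkIJ⟩ :=
    exists_strictMono_image_eq (p := p - 1) (I := image i univ ∩ image j univ) (by omega)
  obtain ⟨s, hs, hsk⟩ := exists_strictMono_comp_eq hj hk (hkIJ ▸ inter_subset_right)
  obtain ⟨r, hr, rfl⟩ := exists_strictMono_comp_eq hi hk (hkIJ ▸ inter_subset_left)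
  rw [← hkIJ, liftShadow_image hnn hi, liftShadow_image hnn hj]
  calc _ = pushforward (zeroExtend hnn (fun u => i (r u))) (dproj (S i) r) :=
        pushforward_zeroOutside_comp hnn hi.injective r (S i)
    _ = pushforward (zeroExtend hnn (fun u => j (s u))) (dproj (S j) s) :=
        pushforward_zeroExtend_congr hnn hsk.symm (H i j hi hj r s hr hs hsk.symm)
    _ = _ := by rw [← pushforward_zeroOutside_comp hnn hj.injective s (S j), hsk]

theorem IsRealistic.isRealisable (H : IsRealistic S) (hnn : ∀ t, 0 < nn t) : IsRealisable S := by
  obtain ⟨C, hC⟩ := exists_proj_eq_of_adjacent (P := fun A => pushforward (zeroOutside hnn A))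
    (T := liftShadow hnn S)
    (fun A B x => by rw [pushforward_pushforward, zeroOutside_comp_zeroOutside])
    (fun I hI => by
      obtain ⟨i, hi, rfl⟩ := exists_strictMono_image_eq hI
      rw [liftShadow_image hnn hi, pushforward_zeroOutside_self hnn hi.injective])
    (fun I J hI hJ hIJ => H.proj_inter_eq hnn hI hJ hIJ)
  refine ⟨C, fun i hi => (dproj_eq_iff hnn hi.injective C (S i)).mpr ?_⟩
  rw [← liftShadow_image hnn hi]
  exact hC _ (by simp [card_image_of_injective _ hi.injective])

end Shadows

theorem stmt_7_general {p q : ℕ} (nn : Fin q → ℕ) (hnn : ∀ t, 0 < nn t)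
    (S : (i : Fin p → Fin q) → ((t : Fin p) → Fin (nn (i t))) → ℤ) :
    (∀ (i j : Fin p → Fin q), StrictMono i → StrictMono j →
      ∀ (r s : Fin (p - 1) → Fin p), StrictMono r → StrictMono s →
        (fun t => i (r t)) = (fun t => j (s t)) →
          HEq (dproj (S i) r) (dproj (S j) s))
    ↔ (∃ C : ((t : Fin q) → Fin (nn t)) → ℤ,
        ∀ i : Fin p → Fin q, StrictMono i → dproj C i = S i) :=
  ⟨fun H => IsRealistic.isRealisable H hnn, IsRealisable.isRealistic⟩

/-- A `(p, n)`-system of shadows is realistic if and only if it is realisable. -/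
theorem stmt_7 {p q : ℕ} (hp : 0 < p) (hq : 0 < q) (nn : Fin q → ℕ) (hnn : ∀ t, 0 < nn t)
    (S : (i : Fin p → Fin q) → ((t : Fin p) → Fin (nn (i t))) → ℤ) :
    (∀ (i j : Fin p → Fin q), StrictMono i → StrictMono j →
      ∀ (r s : Fin (p - 1) → Fin p), StrictMono r → StrictMono s →
        (fun t => i (r t)) = (fun t => j (s t)) →
          HEq (dproj (S i) r) (dproj (S j) s))
    ↔ (∃ C : ((t : Fin q) → Fin (nn t)) → ℤ,
        ∀ i : Fin p → Fin q, StrictMono i → dproj C i = S i) :=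
  stmt_7_general nn hnn S
end

section
/- Let $n, q$ be positive integers and $k \in [q]$. If $S \in \mathcal{T}^{n \cdot \mathbf{1}_k}(\mathbb{Z})$ is a $(k-1)$-crystal (i.e., all its projections onto increasing $(k-1)$-tuples of modes are equal), then there exists a $k$-crystal $C \in \mathcal{T}^{n \cdot \mathbf{1}_q}(\mathbb{Z})$ whose $k$-shadow is $S$. -/
/-!
Change coordinates in every mode from the standard basis to `u = e₀` and `f_x = e_x - e₀`
(`x ≠ 0`); `tensorMulVec M` with `M = updateRow 1 0 1` computes these coordinates, row `0` being
the sum functional. Since `u` sums to `1` and every `f_x` to `0`, projecting onto the modes `i`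
becomes restricting the coordinates to tuples supported in the range of `i`. For a
`(k-1)`-crystal `S`, the coordinate `Ŝ γ` at a tuple `γ` with a zero entry is therefore the
coordinate of the common facet projection at `γ` with that entry removed, and by induction on
`k` the value `Ŝ (β ∘ f)` is the same for every increasing `f : Fin k → Fin q` whose range contains
the support of `β`. The tensor `C` whose coordinate at `β` is this common value has, for every
increasing `i`, an `i`-projection with coordinates `Ŝ`, i.e. equal to `S`.
-/

/-- The projection of a cubical tensor `C` onto the modes indexed by `i`. -/
def cproj {q k n : ℕ} (C : (Fin q → Fin n) → ℤ) (i : Fin k → Fin q) :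
    (Fin k → Fin n) → ℤ :=
  fun a => ∑ b : Fin q → Fin n, if (fun t => b (i t)) = a then C b else 0

open Finset Function

section TensorMulVec

variable {ι σ R : Type*} [Fintype ι] [Fintype σ] [DecidableEq σ] [CommRing R]

/-- The action of `M ⊗ ⋯ ⊗ M` on tensors with modes indexed by `σ`. -/
def tensorMulVec (M : Matrix ι ι R) (T : (σ → ι) → R) : (σ → ι) → R :=
  fun α => ∑ a, (∏ j, M (α j) (a j)) * T a

theorem tensorMulVec_mul (M N : Matrix ι ι R) (T : (σ → ι) → R) :
    tensorMulVec M (tensorMulVec N T) = tensorMulVec (M * N) T := by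
  funext α
  simp only [tensorMulVec, Matrix.mul_apply, Fintype.prod_sum, Finset.mul_sum, Finset.sum_mul,
    Finset.prod_mul_distrib, mul_assoc]
  exact Finset.sum_comm

variable [DecidableEq ι]

theorem tensorMulVec_one (T : (σ → ι) → R) : tensorMulVec (1 : Matrix ι ι R) T = T := by
  funext α
  simp only [tensorMulVec, Matrix.one_apply, Finset.prod_boole, Finset.mem_univ, true_implies]
  rw [Fintype.sum_eq_single α fun a ha => by simp [funext_iff.not.mp (Ne.symm ha)]]
  simp

theorem tensorMulVec_injective {M : Matrix ι ι R} (hM : IsUnit M.det) :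
    Injective (tensorMulVec (σ := σ) M) :=
  LeftInverse.injective (g := tensorMulVec M⁻¹) fun T => by
    rw [tensorMulVec_mul, Matrix.nonsing_inv_mul M hM, tensorMulVec_one]

theorem tensorMulVec_surjective {M : Matrix ι ι R} (hM : IsUnit M.det) :
    Surjective (tensorMulVec (σ := σ) M) :=
  fun T => ⟨tensorMulVec M⁻¹ T, by
    rw [tensorMulVec_mul, Matrix.mul_nonsing_inv M hM, tensorMulVec_one]⟩

end TensorMulVec

theorem cproj_cproj {q m k n : ℕ} (C : (Fin q → Fin n) → ℤ) (i : Fin m → Fin q)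
    (j : Fin k → Fin m) : cproj (cproj C i) j = cproj C (i ∘ j) := by
  funext a
  simp only [cproj, ← Finset.sum_filter]
  rw [Finset.sum_comm' (t' := univ.filter fun b : Fin q → Fin n => (fun t => b (i (j t))) = a)
    (s' := fun b => {fun t => b (i t)})]
  · simp
  · aesop

def IsCrystal {q n : ℕ} (r : ℕ) (C : (Fin q → Fin n) → ℤ) : Prop :=
  ∀ i j : Fin r → Fin q, StrictMono i → StrictMono j → cproj C i = cproj C j

def FacetsAgree {m n : ℕ} (S : (Fin (m + 1) → Fin n) → ℤ) : Prop :=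
  ∀ p p' : Fin (m + 1), cproj S p.succAbove = cproj S p'.succAbove

theorem IsCrystal.facetsAgree {m n : ℕ} {S : (Fin (m + 1) → Fin n) → ℤ} (hS : IsCrystal m S) :
    FacetsAgree S :=
  fun p p' => hS _ _ (Fin.strictMono_succAbove p) (Fin.strictMono_succAbove p')

theorem FacetsAgree.cproj_succAbove {m n : ℕ} {S : (Fin (m + 2) → Fin n) → ℤ}
    (hS : FacetsAgree S) (p : Fin (m + 2)) : FacetsAgree (cproj S p.succAbove) := by
  have hfacet : ∀ a : Fin (m + 1),
      cproj (cproj S Fin.succ) a.succAbove = cproj (cproj S Fin.succ) Fin.succ := by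
    intro a
    have hcomm : Fin.succ ∘ a.succAbove = a.succ.succAbove ∘ Fin.succ := by
      funext j; simp
    rw [cproj_cproj, hcomm, ← cproj_cproj, hS a.succ 0, Fin.succAbove_zero]
  intro a a'
  rw [hS p 0, Fin.succAbove_zero, hfacet, hfacet]

theorem StrictMono.eq_of_range_subset {m : ℕ} {α : Type*} [LinearOrder α] {f g : Fin m → α}
    (hf : StrictMono f) (hg : StrictMono g) (h : Set.range f ⊆ Set.range g) : f = g :=
  (hf.range_inj hg).1 <| Set.eq_of_subset_of_ncard_le h <| by
    rw [Set.ncard_range_of_injective hf.injective, Set.ncard_range_of_injective hg.injective]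

section SupportedTuples

variable {n : ℕ} [NeZero n]

theorem eq_or_exists_zero_of_support_subset {m q : ℕ} {β : Fin q → Fin n}
    {f f' : Fin m → Fin q} (hf : StrictMono f) (hf' : StrictMono f')
    (hβf : support β ⊆ Set.range f) (hβf' : support β ⊆ Set.range f') :
    f = f' ∨ (∃ p, β (f p) = 0) ∧ ∃ p, β (f' p) = 0 := by
  by_cases h : ∃ p, β (f p) = 0
  · by_cases h' : ∃ p, β (f' p) = 0
    · exact Or.inr ⟨h, h'⟩
    · refine Or.inl (hf'.eq_of_range_subset hf ?_).symm
      rintro _ ⟨p, rfl⟩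
      exact hβf fun hp => h' ⟨p, hp⟩
  · refine Or.inl (hf.eq_of_range_subset hf' ?_)
    rintro _ ⟨p, rfl⟩
    exact hβf' fun hp => h ⟨p, hp⟩

theorem support_subset_range_comp_succAbove {m q : ℕ} {β : Fin q → Fin n}
    {f : Fin (m + 1) → Fin q} (hβf : support β ⊆ Set.range f) {p : Fin (m + 1)}
    (hp : β (f p) = 0) : support β ⊆ Set.range (f ∘ p.succAbove) := by
  intro t ht
  obtain ⟨s, rfl⟩ := hβf ht
  obtain ⟨s', rfl⟩ := Fin.exists_succAbove_eq fun hs : s = p => ht (hs ▸ hp)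
  exact ⟨s', rfl⟩

theorem isUnit_det_updateRow_one_zero :
    IsUnit ((1 : Matrix (Fin n) (Fin n) ℤ).updateRow 0 1).det := by
  rw [Matrix.det_of_isUpperTriangular]
  · simp [Matrix.updateRow_apply]
  · intro i j (hij : j < i)
    simp [Matrix.updateRow_apply, ((Fin.zero_le j).trans_lt hij).ne', hij.ne']

open Classical in
/-- `h.choose` can be replaced by any such `f` once `S` is a `(k-1)`-crystal
(`IsCrystal.tensorMulVec_comp_eq`). -/
noncomputable def crystalCoeffs {k q : ℕ} (M : Matrix (Fin n) (Fin n) ℤ)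
    (S : (Fin k → Fin n) → ℤ) (β : Fin q → Fin n) : ℤ :=
  if h : ∃ f : Fin k → Fin q, StrictMono f ∧ support β ⊆ Set.range f then
    tensorMulVec M S (β ∘ h.choose) else 0

variable {M : Matrix (Fin n) (Fin n) ℤ} (hM : ∀ y, M 0 y = 1)
include hM

theorem tensorMulVec_cproj {q k : ℕ} (C : (Fin q → Fin n) → ℤ) {i : Fin k → Fin q}
    (hi : Injective i) {γ : Fin q → Fin n} (hγ : ∀ t ∉ Set.range i, γ t = 0) :
    tensorMulVec M (cproj C i) (γ ∘ i) = tensorMulVec M C γ := by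
  have hprod : ∀ b : Fin q → Fin n, ∏ t, M (γ t) (b t) = ∏ j, M (γ (i j)) (b (i j)) := fun b =>
    (Fintype.prod_of_injective i hi _ _ (fun t ht => by rw [hγ t ht, hM]) fun _ => rfl).symm
  simp only [tensorMulVec, cproj, Finset.mul_sum, mul_ite, mul_zero, hprod]
  rw [Finset.sum_comm]
  refine Finset.sum_congr rfl fun b _ => ?_
  rw [Finset.sum_ite_eq]
  simp

theorem tensorMulVec_eq_cproj_succAbove {m : ℕ} (S : (Fin (m + 1) → Fin n) → ℤ)
    {γ : Fin (m + 1) → Fin n} {p : Fin (m + 1)} (hp : γ p = 0) :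
    tensorMulVec M S γ = tensorMulVec M (cproj S p.succAbove) (γ ∘ p.succAbove) := by
  refine (tensorMulVec_cproj hM S Fin.succAbove_right_injective fun t ht => ?_).symm
  rw [Fin.range_succAbove, Set.notMem_compl_iff, Set.mem_singleton_iff] at ht
  rwa [ht]

theorem FacetsAgree.tensorMulVec_comp_eq_of_cproj {m q : ℕ} {S : (Fin (m + 1) → Fin n) → ℤ}
    (hS : FacetsAgree S) {β : Fin q → Fin n}
    (hP : ∀ (p : Fin (m + 1)) (g g' : Fin m → Fin q), StrictMono g → StrictMono g' →
      support β ⊆ Set.range g → support β ⊆ Set.range g' →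
      tensorMulVec M (cproj S p.succAbove) (β ∘ g) = tensorMulVec M (cproj S p.succAbove) (β ∘ g'))
    {f f' : Fin (m + 1) → Fin q} (hf : StrictMono f) (hf' : StrictMono f')
    (hβf : support β ⊆ Set.range f) (hβf' : support β ⊆ Set.range f') :
    tensorMulVec M S (β ∘ f) = tensorMulVec M S (β ∘ f') := by
  obtain rfl | ⟨⟨p, hp⟩, p', hp'⟩ := eq_or_exists_zero_of_support_subset hf hf' hβf hβf'
  · rfl
  rw [tensorMulVec_eq_cproj_succAbove hM S (γ := β ∘ f) hp,
    tensorMulVec_eq_cproj_succAbove hM S (γ := β ∘ f') hp', hS p' p]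
  exact hP p _ _ (hf.comp (Fin.strictMono_succAbove p)) (hf'.comp (Fin.strictMono_succAbove p'))
    (support_subset_range_comp_succAbove hβf hp) (support_subset_range_comp_succAbove hβf' hp')

theorem FacetsAgree.tensorMulVec_comp_eq {m q : ℕ} {S : (Fin (m + 1) → Fin n) → ℤ}
    (hS : FacetsAgree S) {β : Fin q → Fin n} {f f' : Fin (m + 1) → Fin q}
    (hf : StrictMono f) (hf' : StrictMono f')
    (hβf : support β ⊆ Set.range f) (hβf' : support β ⊆ Set.range f') :
    tensorMulVec M S (β ∘ f) = tensorMulVec M S (β ∘ f') := by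
  induction m with
  | zero =>
    refine hS.tensorMulVec_comp_eq_of_cproj hM (fun _ _ _ _ _ _ _ => ?_) hf hf' hβf hβf'
    exact congrArg _ (Subsingleton.elim _ _)
  | succ m ih =>
    exact hS.tensorMulVec_comp_eq_of_cproj hM
      (fun p _ _ hg hg' => ih (hS.cproj_succAbove p) hg hg') hf hf' hβf hβf'

theorem IsCrystal.tensorMulVec_comp_eq {k q : ℕ} {S : (Fin k → Fin n) → ℤ}
    (hS : IsCrystal (k - 1) S) {β : Fin q → Fin n} {f f' : Fin k → Fin q}
    (hf : StrictMono f) (hf' : StrictMono f')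
    (hβf : support β ⊆ Set.range f) (hβf' : support β ⊆ Set.range f') :
    tensorMulVec M S (β ∘ f) = tensorMulVec M S (β ∘ f') := by
  cases k with
  | zero => exact congrArg _ (Subsingleton.elim _ _)
  | succ m => exact hS.facetsAgree.tensorMulVec_comp_eq hM hf hf' hβf hβf'

theorem IsCrystal.crystalCoeffs_extend {k q : ℕ} {S : (Fin k → Fin n) → ℤ}
    (hS : IsCrystal (k - 1) S) {i : Fin k → Fin q} (hi : StrictMono i) (α : Fin k → Fin n) :
    crystalCoeffs M S (extend i α (0 : Fin q → Fin n)) = tensorMulVec M S α := by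
  set γ := extend i α (0 : Fin q → Fin n)
  have hsupp : support γ ⊆ Set.range i := fun t ht => by
    by_contra hti
    exact ht (extend_apply' _ _ t hti)
  have h : ∃ f : Fin k → Fin q, StrictMono f ∧ support γ ⊆ Set.range f := ⟨i, hi, hsupp⟩
  rw [crystalCoeffs, dif_pos h,
    hS.tensorMulVec_comp_eq hM h.choose_spec.1 hi h.choose_spec.2 hsupp, extend_comp hi.injective]

end SupportedTuples

theorem stmt_8_general {n q k : ℕ} (hn : 0 < n)
    (S : (Fin k → Fin n) → ℤ)
    (hS : ∀ i j : Fin (k - 1) → Fin k, StrictMono i → StrictMono j →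
      cproj S i = cproj S j) :
    ∃ C : (Fin q → Fin n) → ℤ, ∀ i : Fin k → Fin q, StrictMono i → cproj C i = S := by
  have : NeZero n := ⟨hn.ne'⟩
  set M := (1 : Matrix (Fin n) (Fin n) ℤ).updateRow 0 1
  have hM : ∀ y, M 0 y = 1 := fun y => by simp [M]
  obtain ⟨C, hC⟩ := tensorMulVec_surjective isUnit_det_updateRow_one_zero (crystalCoeffs M S)
  refine ⟨C, fun i hi => tensorMulVec_injective isUnit_det_updateRow_one_zero (funext fun α => ?_)⟩
  calc tensorMulVec M (cproj C i) α
      = tensorMulVec M (cproj C i) (extend i α (0 : Fin q → Fin n) ∘ i) := by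
        rw [extend_comp hi.injective]
    _ = crystalCoeffs M S (extend i α 0) := by
        rw [tensorMulVec_cproj hM C hi.injective fun t ht => extend_apply' _ _ t ht, hC]
    _ = tensorMulVec M S α := IsCrystal.crystalCoeffs_extend hM hS hi α

/-- Crystalisation: every `(k-1)`-crystal `S` of dimension `k` is the `k`-shadow
of some `k`-crystal `C` of dimension `q`. -/
theorem stmt_8 {n q k : ℕ} (hn : 0 < n) (hq : 0 < q) (hk1 : 1 ≤ k) (hkq : k ≤ q)
    (S : (Fin k → Fin n) → ℤ)
    (hS : ∀ i j : Fin (k - 1) → Fin k, StrictMono i → StrictMono j →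
      cproj S i = cproj S j) :
    ∃ C : (Fin q → Fin n) → ℤ, ∀ i : Fin k → Fin q, StrictMono i → cproj C i = S :=
  stmt_8_general hn S hS
end
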